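/- Define q : ℕ → ℝ by q(n) = 1 for n ≤ 6, q(7) = −1/10, and q(n) = −1 for n ≥ 8 (the spin does not flip if at most 6 neighbours agree, flips with probability 0.55 if exactly 7 agree, and flips if 8 or more agree). Then Imp(11, q) = 413919/4194304 and Imp(11, q) > Q(11) = (1/(2·√11))·(10/11)⁵. Hence for degree D = 11 this one-step soft-threshold local classical algorithm strictly outperforms the optimal one-step QAOA on triangle-free 11-regular graphs. -/
import Mathlib


/-- `Imp D q` is the expected improvement over `1/2`, per edge, of the fraction of
edges cut by the one-step local algorithm on a triangle-free `D`-regular graph with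
flip rule `q`:
`Imp(D,q) = (1/4)·[(∑_{n=0}^{D−1} 2^{−(D−1)}·C(D−1,n)·q(n))²
  − (∑_{n=0}^{D−1} 2^{−(D−1)}·C(D−1,n)·q(n+1))²]`. -/
noncomputable def Imp (D : ℕ) (q : ℕ → ℝ) : ℝ :=
  (1 / 4) * ((∑ n ∈ Finset.range D, ((D - 1).choose n : ℝ) / 2 ^ (D - 1) * q n) ^ 2
    - (∑ n ∈ Finset.range D, ((D - 1).choose n : ℝ) / 2 ^ (D - 1) * q (n + 1)) ^ 2)

/-- With the soft-threshold rule `q(n) = 1` for `n ≤ 6`,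
`q(7) = −1/10`, `q(n) = −1` for `n ≥ 8`, one has `Imp(11, q) = 413919/4194304` and
`Imp(11, q) > Q(11) = (1/(2·√11))·(10/11)⁵`.  Hence for degree `D = 11` this one-step
soft-threshold local classical algorithm strictly outperforms the optimal one-step
QAOA on triangle-free 11-regular graphs. -/
theorem stmt15 :
    Imp 11 (fun n => if n ≤ 6 then (1 : ℝ) else if n = 7 then -1 / 10 else -1)
        = 413919 / 4194304 ∧
    (413919 / 4194304 : ℝ) > (1 / (2 * Real.sqrt 11)) * (10 / 11) ^ 5 := by
  constructor
  · simp only [Imp, Finset.sum_range_succ, Finset.sum_range_zero]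
    norm_num [Nat.choose]
  · have hs : Real.sqrt 11 > 3.31 := by
      have : (3.31 : ℝ) ^ 2 < 11 := by norm_num
      nlinarith [Real.sq_sqrt (by norm_num : (11:ℝ) ≥ 0),
        Real.sqrt_nonneg (11:ℝ)]
    have hpos : (0:ℝ) < Real.sqrt 11 := by linarith
    rw [gt_iff_lt, div_mul_eq_mul_div, div_lt_iff₀ (by positivity)]
    nlinarith
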